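/- arXiv:1810.06052 — 6 statements merged into one kernel-verified Lean document; each statement's English description precedes it below -/
import Mathlib

section
/- For all n ≥ k ≥ 1, S̃_q(n+1,k) = Σ_{j=0}^{n} binom(n,j) · q^(j-k+1) · S̃_q(j,k-1), where the right-hand side is understood in the Laurent polynomial ring (all negative powers cancel). -/
open LaurentPolynomial

/-- The q-integer [k]_q as a Laurent polynomial. -/
noncomputable def qintL (k : ℕ) : LaurentPolynomial ℚ := ∑ i ∈ Finset.range k, T (i : ℤ)

/-- The q-Stirling number S̃_q(n,k), as a Laurent polynomial. -/
noncomputable def SqtL : ℕ → ℕ → LaurentPolynomial ℚ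
  | 0, 0 => 1
  | 0, _ + 1 => 0
  | _ + 1, 0 => 0
  | n + 1, k + 1 => SqtL n k + qintL (k + 1) * SqtL n (k + 1)

lemma qintL_succ (k : ℕ) : qintL (k + 1) = 1 + T 1 * qintL k := by
  unfold qintL
  rw [Finset.sum_range_succ']
  have h : ∀ i : ℕ, (T (((i + 1 : ℕ)) : ℤ) : LaurentPolynomial ℚ) = T 1 * T ((i : ℕ) : ℤ) := by
    intro i; push_cast; rw [T_add, mul_comm]
  simp only [h, Nat.cast_zero, T_zero, Finset.mul_sum]
  ring

lemma SqtL_one : ∀ n : ℕ, SqtL (n + 1) 1 = 1 := by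
  intro n
  induction n with
  | zero => simp [SqtL, qintL]
  | succ n ih =>
    show SqtL (n + 1) 0 + qintL 1 * SqtL (n + 1) 1 = 1
    rw [ih]
    simp [SqtL, qintL]

lemma SqtL_zero_right (n : ℕ) : SqtL (n + 1) 0 = 0 := rfl

lemma SqtL_succ_succ (n k : ℕ) :
    SqtL (n + 1) (k + 1) = SqtL n k + qintL (k + 1) * SqtL n (k + 1) := rfl

lemma main : ∀ n k : ℕ, SqtL (n + 1) (k + 1) =
    ∑ j ∈ Finset.range (n + 1),
      (n.choose j : LaurentPolynomial ℚ) * T ((j : ℤ) - k) * SqtL j k := by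
  intro n
  induction n with
  | zero =>
    intro k
    cases k with
    | zero => simp [SqtL, qintL]
    | succ k => simp [SqtL]
  | succ n ih =>
    intro k
    cases k with
    | zero =>
      rw [SqtL_one, Finset.sum_range_succ']
      simp [SqtL_zero_right, show SqtL 0 0 = 1 from rfl]
    | succ k =>
      rw [SqtL_succ_succ, ih k, ih (k + 1), qintL_succ]
      have h0 : SqtL 0 (k + 1) = 0 := rfl
      have hterm : ∀ j : ℕ,
          (((n + 1).choose (j + 1) : ℕ) : LaurentPolynomial ℚ) *
              T (((j + 1 : ℕ) : ℤ) - ((k + 1 : ℕ) : ℤ)) * SqtL (j + 1) (k + 1)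
          = (n.choose j : LaurentPolynomial ℚ) * T ((j : ℤ) - k) * SqtL j k
            + T 1 * qintL (k + 1) *
                ((n.choose j : LaurentPolynomial ℚ) * T ((j : ℤ) - ((k + 1 : ℕ) : ℤ)) * SqtL j (k + 1))
            + (n.choose (j + 1) : LaurentPolynomial ℚ) *
                T (((j + 1 : ℕ) : ℤ) - ((k + 1 : ℕ) : ℤ)) * SqtL (j + 1) (k + 1) := by
        intro j
        have e2 : (((n + 1).choose (j + 1) : ℕ) : LaurentPolynomial ℚ)
            = (n.choose j : ℕ) + (n.choose (j + 1) : ℕ) := by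
          rw [Nat.choose_succ_succ]; push_cast; ring
        have e3 : (T (((j + 1 : ℕ) : ℤ) - ((k + 1 : ℕ) : ℤ)) : LaurentPolynomial ℚ)
            = T ((j : ℤ) - k) := by congr 1; push_cast; ring
        have e4 : (T ((j : ℤ) - k) : LaurentPolynomial ℚ)
            = T 1 * T ((j : ℤ) - ((k + 1 : ℕ) : ℤ)) := by
          rw [← T_add]; congr 1; push_cast; ring
        rw [e2, e3, SqtL_succ_succ, e4]
        ring
      have hshift :
          ∑ j ∈ Finset.range (n + 1),
              (n.choose (j + 1) : LaurentPolynomial ℚ) *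
                T (((j + 1 : ℕ) : ℤ) - ((k + 1 : ℕ) : ℤ)) * SqtL (j + 1) (k + 1)
          = ∑ j ∈ Finset.range (n + 1),
              (n.choose j : LaurentPolynomial ℚ) * T ((j : ℤ) - ((k + 1 : ℕ) : ℤ)) * SqtL j (k + 1) := by
        have h1 := Finset.sum_range_succ'
          (fun j => (n.choose j : LaurentPolynomial ℚ) * T ((j : ℤ) - ((k + 1 : ℕ) : ℤ)) * SqtL j (k + 1)) (n + 1)
        have h2 := Finset.sum_range_succ
          (fun j => (n.choose j : LaurentPolynomial ℚ) * T ((j : ℤ) - ((k + 1 : ℕ) : ℤ)) * SqtL j (k + 1)) (n + 1)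
        simp only [h0, mul_zero, add_zero, Nat.choose_succ_self, Nat.cast_zero, zero_mul] at h1 h2
        rw [h2] at h1
        exact h1.symm
      conv_rhs => rw [Finset.sum_range_succ', h0, mul_zero, add_zero,
        Finset.sum_congr rfl fun j _ => hterm j,
        Finset.sum_add_distrib, Finset.sum_add_distrib, ← Finset.mul_sum, hshift]
      ring

theorem stmt1 (n k : ℕ) (hk : 1 ≤ k) (hn : k ≤ n) :
    SqtL (n + 1) k =
      ∑ j ∈ Finset.range (n + 1),
        (n.choose j : LaurentPolynomial ℚ) * T ((j : ℤ) - (k : ℤ) + 1) * SqtL j (k - 1) := by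
  obtain ⟨k, rfl⟩ := Nat.exists_eq_add_of_le hk
  rw [add_comm 1 k] at *
  rw [main n k]
  refine Finset.sum_congr rfl fun j _ => ?_
  have : ((j : ℤ) - ((k + 1 : ℕ) : ℤ) + 1) = (j : ℤ) - k := by push_cast; ring
  rw [this, Nat.add_sub_cancel]
end

section
/- For every RGF w of length n, ls(w) − vls(w) = n − pro(w) − bk(w) + 1, where ls(w) = Σ_i ls_i(w), vls(w) = Σ_i vls_i(w), bk(w) is the maximum letter of w, and pro(w) is the position of the rightmost 1 in w. -/
open Finset

variable {n : ℕ}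

/-- Positions of leftmost occurrences of letters in the word `w`. -/
def Lset (w : Fin n → ℕ) : Finset (Fin n) :=
  Finset.univ.filter fun i => ∀ j, j < i → w j ≠ w i

/-- Positions of rightmost occurrences of letters in the word `w`. -/
def Rset (w : Fin n → ℕ) : Finset (Fin n) :=
  Finset.univ.filter fun i => ∀ j, i < j → w j ≠ w i

/-- The maximum letter of the word `w`. -/
def bk (w : Fin n → ℕ) : ℕ := Finset.univ.sup w

/-- The (1-indexed) position of the rightmost `1` in `w`. -/
def pro (w : Fin n → ℕ) : ℕ :=
  (Finset.univ.filter fun i => w i = 1).sup fun i => (i : ℕ) + 1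

def lsi (w : Fin n → ℕ) (i : Fin n) : ℕ :=
  ((Lset w).filter fun j => j < i ∧ w j < w i).card

def rsi (w : Fin n → ℕ) (i : Fin n) : ℕ :=
  ((Rset w).filter fun j => i < j ∧ w j < w i).card

def vlsi (w : Fin n → ℕ) (i : Fin n) : ℕ :=
  if i ∉ Rset w ∧ pro w < (i : ℕ) + 1 then lsi w i - 1
  else if i ∈ Rset w ∧ (i : ℕ) + 1 < pro w then lsi w i + 1
  else lsi w i

def vrsi (w : Fin n → ℕ) (i : Fin n) : ℕ :=
  if i ∉ Rset w ∧ pro w < (i : ℕ) + 1 then rsi w i + 1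
  else if i ∈ Rset w ∧ (i : ℕ) + 1 < pro w then rsi w i - 1
  else rsi w i

def ls (w : Fin n → ℕ) : ℕ := ∑ i, lsi w i
def rs (w : Fin n → ℕ) : ℕ := ∑ i, rsi w i
def vls (w : Fin n → ℕ) : ℕ := ∑ i, vlsi w i
def vrs (w : Fin n → ℕ) : ℕ := ∑ i, vrsi w i

/-- `w` is a restricted growth function: positive letters, `w₁ = 1`, and each
letter is at most one more than the maximum of the preceding letters. -/
def IsRGF (w : Fin n → ℕ) : Prop :=
  (∀ i, 1 ≤ w i) ∧ (∀ i : Fin n, (i : ℕ) = 0 → w i = 1) ∧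
    ∀ i : Fin n, 0 < (i : ℕ) → w i ≤ (Finset.univ.filter fun j => j < i).sup w + 1

/-- The ascent set of `w`. -/
def AscSet (w : Fin n → ℕ) : Finset (Fin n) :=
  Finset.univ.filter fun i => ∃ j : Fin n, (j : ℕ) = (i : ℕ) + 1 ∧ w i < w j


lemma card_filter_le_val (n p : ℕ) (hp : p ≤ n) :
    (univ.filter fun i : Fin n => p ≤ (i : ℕ)).card = n - p := by
  have h : (univ.filter fun i : Fin n => p ≤ (i : ℕ)).card = (Finset.Ico p n).card := by
    refine Finset.card_bij (fun i _ => (i : ℕ)) ?_ ?_ ?_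
    · intro a ha
      simp only [mem_filter, mem_univ, true_and] at ha
      simp [Finset.mem_Ico, ha, a.isLt]
    · intro a _ b _ h
      exact Fin.ext h
    · intro b hb
      simp only [Finset.mem_Ico] at hb
      exact ⟨⟨b, hb.2⟩, by simp [hb.1], rfl⟩
  rw [h, Nat.card_Ico]

/-- For every RGF `w` of length `n`: `ls(w) - vls(w) = n - pro(w) - bk(w) + 1`. -/
theorem stmt4 (n : ℕ) (hn : 0 < n) (w : Fin n → ℕ) (hw : IsRGF w) :
    (ls w : ℤ) - (vls w : ℤ) = (n : ℤ) - (pro w : ℤ) - (bk w : ℤ) + 1 := by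
  haveI : Nonempty (Fin n) := ⟨⟨0, hn⟩⟩
  set z : Fin n := ⟨0, hn⟩ with hzdef
  have hz1 : w z = 1 := hw.2.1 z rfl
  -- pro facts
  have hproge : ∀ i : Fin n, w i = 1 → (i : ℕ) + 1 ≤ pro w := by
    intro i hi
    exact Finset.le_sup (f := fun j : Fin n => (j : ℕ) + 1) (mem_filter.mpr ⟨mem_univ i, hi⟩)
  have hpro1 : 1 ≤ pro w := hproge z hz1
  obtain ⟨i₀, hi₀mem, hi₀⟩ : ∃ i₀ ∈ (univ.filter fun i => w i = 1), pro w = (i₀ : ℕ) + 1 :=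
    Finset.exists_mem_eq_sup _ ⟨z, by simp [hz1]⟩ _
  have hwi₀ : w i₀ = 1 := (mem_filter.mp hi₀mem).2
  have hi₀R : i₀ ∈ Rset w := by
    simp only [Rset, mem_filter, mem_univ, true_and]
    intro j hj hje
    rw [hwi₀] at hje
    have h1 := hproge j hje
    have h2 : (i₀ : ℕ) < (j : ℕ) := hj
    omega
  have hpron : pro w ≤ n := by
    have := i₀.isLt; omega
  -- bk facts
  have hbk1 : ∀ i, w i ≤ bk w := fun i => Finset.le_sup (mem_univ i)
  obtain ⟨ib, -, hib⟩ := Finset.exists_mem_eq_sup (univ : Finset (Fin n)) univ_nonempty w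
  -- every value between 1 and bk appears
  have hsurj : ∀ k, 1 ≤ k → k ≤ bk w → ∃ i, w i = k := by
    intro k hk1 hk2
    have hne : (univ.filter fun i => k ≤ w i).Nonempty := ⟨ib, by simp only [mem_filter, mem_univ, true_and]; rw [← hib]; exact hk2⟩
    set i := (univ.filter fun i => k ≤ w i).min' hne with hidef
    have hiS : k ≤ w i := by
      have := Finset.min'_mem (univ.filter fun i => k ≤ w i) hne
      simpa using this
    have hlt : ∀ j, j < i → w j < k := by
      intro j hj
      by_contra hc
      push_neg at hc
      have : i ≤ j := Finset.min'_le _ _ (by simpa using hc)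
      exact absurd hj (not_lt.mpr this)
    rcases Nat.eq_zero_or_pos (i : ℕ) with h0 | h0
    · have := hw.2.1 i h0
      exact ⟨i, by omega⟩
    · have hle := hw.2.2 i h0
      have hsup : (univ.filter fun j => j < i).sup w ≤ k - 1 := by
        apply Finset.sup_le
        intro j hj
        have := hlt j (mem_filter.mp hj).2
        omega
      exact ⟨i, by omega⟩
  -- Rset has a rightmost occurrence of every value
  have hRcard : (Rset w).card = bk w := by
    have hinj : Set.InjOn w (Rset w) := by
      intro a ha b hb hab
      simp only [Finset.coe_filter, Rset, Set.mem_setOf_eq, mem_univ, true_and] at ha hb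
      rcases lt_trichotomy a b with h | h | h
      · exact absurd hab.symm (ha b h)
      · exact h
      · exact absurd hab (hb a h)
    have himg : Finset.image w (Rset w) = Finset.Icc 1 (bk w) := by
      ext k
      simp only [Finset.mem_image, Finset.mem_Icc]
      constructor
      · rintro ⟨i, -, rfl⟩
        exact ⟨hw.1 i, hbk1 i⟩
      · rintro ⟨hk1, hk2⟩
        obtain ⟨i, hi⟩ := hsurj k hk1 hk2
        have hne : (univ.filter fun j => w j = k).Nonempty := ⟨i, by simp [hi]⟩
        set m := (univ.filter fun j => w j = k).max' hne with hmdef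
        have hm : w m = k := by
          have := Finset.max'_mem (univ.filter fun j => w j = k) hne
          simpa using this
        refine ⟨m, ?_, hm⟩
        simp only [Rset, mem_filter, mem_univ, true_and]
        intro j hj hje
        have : j ≤ m := Finset.le_max' _ _ (by simp [hje, hm])
        exact absurd hj (not_lt.mpr this)
    calc (Rset w).card = (Finset.image w (Rset w)).card :=
          (Finset.card_image_of_injOn hinj).symm
      _ = (Finset.Icc 1 (bk w)).card := by rw [himg]
      _ = bk w := by rw [Nat.card_Icc]; omega
  -- lsi ≥ 1 in the first case
  have hls1 : ∀ i : Fin n, i ∉ Rset w → pro w < (i : ℕ) + 1 → 1 ≤ lsi w i := by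
    intro i hiR hip
    have hwi : 2 ≤ w i := by
      have h1 := hw.1 i
      rcases Nat.lt_or_ge (w i) 2 with h | h
      · have : w i = 1 := by omega
        have := hproge i this
        omega
      · exact h
    have hzi : z < i := by
      have : (z : ℕ) < (i : ℕ) := by simp [hzdef]; omega
      exact this
    have hzL : z ∈ Lset w := by
      simp only [Lset, mem_filter, mem_univ, true_and]
      intro j hj
      have : (j : ℕ) < (z : ℕ) := hj
      simp [hzdef] at this
    have : z ∈ (Lset w).filter fun j => j < i ∧ w j < w i := by
      simp only [mem_filter]
      exact ⟨hzL, hzi, by omega⟩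
    have := Finset.card_pos.mpr ⟨z, this⟩
    exact this
  -- pointwise identity
  set P : Fin n → Prop := fun i => i ∉ Rset w ∧ pro w < (i : ℕ) + 1 with hP
  set Q : Fin n → Prop := fun i => i ∈ Rset w ∧ (i : ℕ) + 1 < pro w with hQ
  have key : ∀ i : Fin n, (lsi w i : ℤ) - (vlsi w i : ℤ) =
      (if P i then (1 : ℤ) else 0) - (if Q i then (1 : ℤ) else 0) := by
    intro i
    by_cases h1 : P i
    · have hl := hls1 i h1.1 h1.2
      have hq : ¬ Q i := fun hq => h1.1 hq.1
      rw [vlsi, if_pos h1, if_pos h1, if_neg hq]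
      push_cast [Nat.cast_sub hl]
      ring
    · by_cases h2 : Q i
      · rw [vlsi, if_neg h1, if_pos h2, if_neg h1, if_pos h2]
        push_cast
        ring
      · rw [vlsi, if_neg h1, if_neg h2, if_neg h1, if_neg h2]
        ring
  have hsum : (ls w : ℤ) - (vls w : ℤ) =
      ((univ.filter P).card : ℤ) - ((univ.filter Q).card : ℤ) := by
    rw [ls, vls]
    push_cast
    rw [← Finset.sum_sub_distrib, Finset.sum_congr rfl fun i _ => key i,
      Finset.sum_sub_distrib]
    simp [Finset.sum_boole]
  -- counting
  set P' : Fin n → Prop := fun i => pro w < (i : ℕ) + 1 with hP'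
  have hT : (univ.filter P').card = n - pro w := by
    rw [show (univ.filter P') = (univ.filter fun i : Fin n => pro w ≤ (i : ℕ)) by
      apply Finset.filter_congr; intro i _; simp [hP']]
    exact card_filter_le_val n (pro w) hpron
  have hsplitT : ((Rset w).filter P').card + (univ.filter P).card = n - pro w := by
    rw [← hT]
    have := Finset.card_filter_add_card_filter_not
      (s := univ.filter P') (p := fun i => i ∈ Rset w)
    rw [show (univ.filter P').filter (fun i => i ∈ Rset w) = (Rset w).filter P' by
        ext i; simp only [mem_filter, mem_univ, true_and]; tauto,
      show (univ.filter P').filter (fun i => ¬ i ∈ Rset w) = univ.filter P by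
        ext i; simp only [mem_filter, mem_univ, true_and, hP]; tauto] at this
    exact this
  have hsplitR : (Rset w).card =
      ((Rset w).filter fun i : Fin n => (i : ℕ) + 1 < pro w).card +
      ((Rset w).filter fun i : Fin n => (i : ℕ) + 1 = pro w).card +
      ((Rset w).filter P').card := by
    have h1 := Finset.card_filter_add_card_filter_not
      (s := Rset w) (p := fun i : Fin n => (i : ℕ) + 1 < pro w)
    have h2 := Finset.card_filter_add_card_filter_not
      (s := (Rset w).filter fun i : Fin n => ¬ ((i : ℕ) + 1 < pro w))
      (p := fun i : Fin n => (i : ℕ) + 1 = pro w)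
    rw [show ((Rset w).filter fun i : Fin n => ¬ ((i : ℕ) + 1 < pro w)).filter
          (fun i : Fin n => (i : ℕ) + 1 = pro w) =
          (Rset w).filter fun i : Fin n => (i : ℕ) + 1 = pro w by
        rw [Finset.filter_filter]; apply Finset.filter_congr; intro i _; simp; omega,
      show ((Rset w).filter fun i : Fin n => ¬ ((i : ℕ) + 1 < pro w)).filter
          (fun i : Fin n => ¬ ((i : ℕ) + 1 = pro w)) = (Rset w).filter P' by
        rw [Finset.filter_filter]; apply Finset.filter_congr; intro i _
        simp [hP']; omega] at h2
    omega
  have hmid : ((Rset w).filter fun i : Fin n => (i : ℕ) + 1 = pro w).card = 1 := by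
    rw [show ((Rset w).filter fun i : Fin n => (i : ℕ) + 1 = pro w) = {i₀} by
      ext i
      simp only [mem_filter, Finset.mem_singleton]
      constructor
      · rintro ⟨-, hi⟩
        exact Fin.ext (by omega)
      · rintro rfl
        exact ⟨hi₀R, hi₀.symm⟩]
    rfl
  have hQcard : (univ.filter Q).card = ((Rset w).filter fun i : Fin n => (i : ℕ) + 1 < pro w).card := by
    congr 1
    ext i
    simp only [mem_filter, mem_univ, true_and, hQ]
  rw [hsum]
  rw [hRcard] at hsplitR
  have : (((univ.filter P).card : ℤ)) = (n : ℤ) - pro w - ((Rset w).filter P').card := by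
    omega
  omega
end

section
/- For every RGF w of length n, ls(w) = Σ_{i=1}^{n} (w_i − 1). -/
open Finset

variable {n : ℕ}

/-- Every value `v` with `1 ≤ v ≤ w i` appears at some position `j ≤ i`. -/
lemma rgf_exists_le {w : Fin n → ℕ} (hw : IsRGF w) :
    ∀ m : ℕ, ∀ i : Fin n, (i : ℕ) = m → ∀ v, 1 ≤ v → v ≤ w i →
      ∃ j : Fin n, j ≤ i ∧ w j = v := by
  intro m
  induction m using Nat.strong_induction_on with
  | _ m ih =>
    intro i him v hv1 hv
    rcases eq_or_lt_of_le hv with h | h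
    · exact ⟨i, le_refl _, h.symm⟩
    · have hi0 : 0 < (i : ℕ) := by
        by_contra h0
        have : w i = 1 := hw.2.1 i (by omega)
        omega
      have hsup := hw.2.2 i hi0
      have hne : (Finset.univ.filter fun j => j < i).Nonempty := by
        have hn : 0 < n := i.pos
        refine ⟨⟨0, hn⟩, ?_⟩
        simp only [Finset.mem_filter, Finset.mem_univ, true_and]
        exact Fin.lt_def.mpr (by simpa using hi0)
      obtain ⟨j, hjmem, hjsup⟩ := Finset.exists_mem_eq_sup _ hne w
      have hji : j < i := (Finset.mem_filter.mp hjmem).2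
      have hvj : v ≤ w j := by omega
      obtain ⟨k, hk, hkv⟩ := ih (j : ℕ) (by omega) j rfl v hv1 hvj
      exact ⟨k, le_of_lt (lt_of_le_of_lt hk hji), hkv⟩

lemma rgf_exists_Lset {w : Fin n → ℕ} (hw : IsRGF w) (i : Fin n) (v : ℕ)
    (hv1 : 1 ≤ v) (hvi : v < w i) :
    ∃ j : Fin n, j ∈ Lset w ∧ j < i ∧ w j = v := by
  obtain ⟨j, hji, hjv⟩ := rgf_exists_le hw (i : ℕ) i rfl v hv1 (le_of_lt hvi)
  have hji' : j < i := lt_of_le_of_ne hji (by rintro rfl; omega)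
  set s := Finset.univ.filter fun k : Fin n => w k = v with hs
  have hjs : j ∈ s := by simp [hs, hjv]
  have hne : s.Nonempty := ⟨j, hjs⟩
  refine ⟨s.min' hne, ?_, ?_, ?_⟩
  · simp only [Lset, Finset.mem_filter, Finset.mem_univ, true_and]
    intro k hk
    intro hkw
    have hmv : w (s.min' hne) = v := by
      have := s.min'_mem hne
      simpa [hs] using this
    have : k ∈ s := by simp [hs, hkw ▸ hmv]
    exact absurd (s.min'_le k this) (not_le.mpr hk)
  · exact lt_of_le_of_lt (s.min'_le j hjs) hji'
  · have := s.min'_mem hne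
    simpa [hs] using this

lemma lsi_eq {w : Fin n → ℕ} (hw : IsRGF w) (i : Fin n) : lsi w i = w i - 1 := by
  have hcard : ((Lset w).filter fun j => j < i ∧ w j < w i).card
      = (Finset.Icc 1 (w i - 1)).card := by
    apply Finset.card_bij (fun j _ => w j)
    · intro j hj
      simp only [Finset.mem_filter] at hj
      have h1 := hw.1 j
      have h2 := hj.2.2
      simp only [Finset.mem_Icc]
      omega
    · intro a ha b hb hab
      simp only [Finset.mem_filter, Lset, Finset.mem_univ, true_and] at ha hb
      rcases lt_trichotomy a b with h | h | h
      · exact absurd hab (hb.1 a h)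
      · exact h
      · exact absurd hab.symm (ha.1 b h)
    · intro v hv
      simp only [Finset.mem_Icc] at hv
      have hwi := hw.1 i
      obtain ⟨j, hjL, hji, hjv⟩ := rgf_exists_Lset hw i v hv.1 (by omega)
      refine ⟨j, ?_, hjv⟩
      simp only [Finset.mem_filter]
      exact ⟨hjL, hji, by omega⟩
  have hcc : (Finset.Icc 1 (w i - 1)).card = w i - 1 := by
    rw [Nat.card_Icc]; omega
  simpa [lsi, hcc] using hcard

/-- For every RGF `w` of length `n`, `ls(w) = Σᵢ (wᵢ - 1)`. -/
theorem stmt5 (n : ℕ) (w : Fin n → ℕ) (hw : IsRGF w) :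
    ls w = ∑ i, (w i - 1) := by
  unfold ls
  exact Finset.sum_congr rfl fun i _ => lsi_eq hw i
end

section
/- For every RGF w of length n and every i ∈ [n], vrs_i(w) = #{j ∈ R(w) : j > i, w_i ≥ w_j > 1}. -/
open Finset

variable {n : ℕ}

/-- For every RGF `w` and every position `i`,
`vrs_i(w) = #{j ∈ R(w) : j > i, w_i ≥ w_j > 1}`. -/
theorem stmt6 (n : ℕ) (w : Fin n → ℕ) (hw : IsRGF w) (i : Fin n) :
    vrsi w i = ((Rset w).filter fun j => i < j ∧ w j ≤ w i ∧ 1 < w j).card := by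
  classical
  have hn : 0 < n := i.pos
  have h1 := hw.1
  have hRmem : ∀ j : Fin n, j ∈ Rset w ↔ ∀ k, j < k → w k ≠ w j := by
    intro j; simp [Rset]
  have huniq : ∀ j k : Fin n, j ∈ Rset w → k ∈ Rset w → w j = w k → j = k := by
    intro j k hj hk he
    rcases lt_trichotomy j k with h | h | h
    · exact absurd he.symm ((hRmem j).mp hj k h)
    · exact h
    · exact absurd he ((hRmem k).mp hk j h)
  -- rightmost 1
  set S1 : Finset (Fin n) := Finset.univ.filter (fun j => w j = 1) with hS1
  have hS1ne : S1.Nonempty := ⟨⟨0, hn⟩, by simp [hS1, hw.2.1 ⟨0, hn⟩ rfl]⟩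
  set p := S1.max' hS1ne with hp
  have hpS : p ∈ S1 := S1.max'_mem hS1ne
  have hwp : w p = 1 := by simpa [hS1] using hpS
  have hple : ∀ j, w j = 1 → j ≤ p := fun j hj => S1.le_max' j (by simp [hS1, hj])
  have hpro : pro w = (p : ℕ) + 1 := by
    unfold pro
    apply le_antisymm
    · apply Finset.sup_le
      intro j hj
      have hj1 : w j = 1 := by simpa using (Finset.mem_filter.mp hj).2
      have hle : (j : ℕ) ≤ (p : ℕ) := hple j hj1
      omega
    · exact Finset.le_sup (f := fun j : Fin n => (j : ℕ) + 1)
        (Finset.mem_filter.mpr ⟨Finset.mem_univ p, hwp⟩)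
  have hpR : p ∈ Rset w := by
    rw [hRmem]
    intro k hk hke
    have : k ≤ p := hple k (by rw [hke, hwp])
    exact absurd hk (not_lt.mpr this)
  have honep : ∀ j : Fin n, j ∈ Rset w → w j = 1 → j = p :=
    fun j hj h1j => huniq j p hj hpR (by rw [h1j, hwp])
  set A := (Rset w).filter (fun j => i < j ∧ w j < w i) with hA
  set B := (Rset w).filter (fun j => i < j ∧ w j ≤ w i ∧ 1 < w j) with hB
  have hrsiA : rsi w i = A.card := rfl
  by_cases hwi : w i = 1
  · -- both sides are zero
    have hAe : A = ∅ := by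
      apply Finset.filter_false_of_mem
      intro j _
      have := h1 j
      simp only [hwi]
      omega
    have hBe : B = ∅ := by
      apply Finset.filter_false_of_mem
      intro j _
      simp only [hwi]
      omega
    have hip : i ≤ p := hple i hwi
    have hc1 : ¬ (i ∉ Rset w ∧ pro w < (i : ℕ) + 1) := by
      rw [hpro]
      rintro ⟨_, h⟩
      have : (i : ℕ) ≤ (p : ℕ) := hip
      omega
    have hc2 : ¬ (i ∈ Rset w ∧ (i : ℕ) + 1 < pro w) := by
      rw [hpro]
      rintro ⟨hiR, h⟩
      have hlt : i < p := by
        have : (i : ℕ) < (p : ℕ) := by omega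
        exact this
      exact (hRmem i).mp hiR p hlt (by rw [hwp, hwi])
    rw [vrsi, if_neg hc1, if_neg hc2, hrsiA, hAe, hBe]
  · have hwi2 : 1 < w i := lt_of_le_of_ne (h1 i) (fun h => hwi h.symm)
    have hne1 : ∀ j : Fin n, j ∈ Rset w → i < j → w j < w i → j ≠ p → 1 < w j := by
      intro j hjR _ _ hjp
      have := h1 j
      rcases eq_or_lt_of_le this with h | h
      · exact absurd (honep j hjR h.symm) hjp
      · exact h
    by_cases hiR : i ∈ Rset w
    · -- B = A.erase p
      have hBA : B = A.erase p := by
        ext j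
        simp only [hB, hA, Finset.mem_erase, Finset.mem_filter]
        constructor
        · rintro ⟨hjR, hij, hle, h1j⟩
          have hjlt : w j < w i := by
            rcases eq_or_lt_of_le hle with h | h
            · exact absurd (huniq j i hjR hiR h) (ne_of_gt hij)
            · exact h
          refine ⟨fun h => ?_, hjR, hij, hjlt⟩
          rw [h, hwp] at h1j; omega
        · rintro ⟨hjp, hjR, hij, hjlt⟩
          exact ⟨hjR, hij, le_of_lt hjlt, hne1 j hjR hij hjlt hjp⟩
      by_cases hip : (i : ℕ) + 1 < pro w
      · have hiplt : i < p := by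
          rw [hpro] at hip
          exact show (i : ℕ) < (p : ℕ) by omega
        have hpA : p ∈ A := by
          simp only [hA, Finset.mem_filter]
          exact ⟨hpR, hiplt, by rw [hwp]; exact hwi2⟩
        rw [vrsi, if_neg (by tauto), if_pos ⟨hiR, hip⟩, hrsiA, hBA,
          Finset.card_erase_of_mem hpA]
      · have hpA : p ∉ A := by
          simp only [hA, Finset.mem_filter]
          rintro ⟨_, hlt, _⟩
          rw [hpro] at hip
          have : (i : ℕ) < (p : ℕ) := hlt
          omega
        rw [vrsi, if_neg (by tauto), if_neg (by tauto), hrsiA, hBA,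
          Finset.erase_eq_of_notMem hpA]
    · -- i ∉ Rset w : there is a later rightmost occurrence q of w i
      set S2 : Finset (Fin n) := Finset.univ.filter (fun j => w j = w i) with hS2
      have hS2ne : S2.Nonempty := ⟨i, by simp [hS2]⟩
      set q := S2.max' hS2ne with hq
      have hwq : w q = w i := by simpa [hS2] using S2.max'_mem hS2ne
      have hqle : ∀ j, w j = w i → j ≤ q := fun j hj => S2.le_max' j (by simp [hS2, hj])
      have hqR : q ∈ Rset w := by
        rw [hRmem]
        intro k hk hke
        exact absurd hk (not_lt.mpr (hqle k (by rw [hke, hwq])))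
      have hiq : i < q := by
        rcases lt_or_eq_of_le (hqle i rfl) with h | h
        · exact h
        · exact absurd (h ▸ hqR) hiR
      have hqnp : q ∉ A.erase p := by
        simp only [hA, Finset.mem_erase, Finset.mem_filter]
        rintro ⟨_, _, _, h⟩
        rw [hwq] at h; exact lt_irrefl _ h
      have hBA : B = insert q (A.erase p) := by
        ext j
        simp only [hB, hA, Finset.mem_insert, Finset.mem_erase, Finset.mem_filter]
        constructor
        · rintro ⟨hjR, hij, hle, h1j⟩
          rcases eq_or_lt_of_le hle with h | h
          · exact Or.inl (huniq j q hjR hqR (by rw [h, hwq]))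
          · refine Or.inr ⟨fun hp' => ?_, hjR, hij, h⟩
            rw [hp', hwp] at h1j; omega
        · rintro (h | ⟨hjp, hjR, hij, hjlt⟩)
          · subst h
            exact ⟨hqR, hiq, le_of_eq hwq, hwq ▸ hwi2⟩
          · exact ⟨hjR, hij, le_of_lt hjlt, hne1 j hjR hij hjlt hjp⟩
      rw [hBA, Finset.card_insert_of_notMem hqnp]
      by_cases hip : pro w < (i : ℕ) + 1
      · have hpA : p ∉ A := by
          simp only [hA, Finset.mem_filter]
          rintro ⟨_, hlt, _⟩
          rw [hpro] at hip
          have : (i : ℕ) < (p : ℕ) := hlt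
          omega
        rw [vrsi, if_pos ⟨hiR, hip⟩, hrsiA, Finset.erase_eq_of_notMem hpA]
      · have hiplt : i < p := by
          rw [hpro] at hip
          have hipne : (i : ℕ) ≠ (p : ℕ) := by
            intro h
            have : i = p := Fin.ext h
            rw [this, hwp] at hwi2; omega
          exact show (i : ℕ) < (p : ℕ) by omega
        have hpA : p ∈ A := by
          simp only [hA, Finset.mem_filter]
          exact ⟨hpR, hiplt, by rw [hwp]; exact hwi2⟩
        have hAc : 1 ≤ A.card := Finset.card_pos.mpr ⟨p, hpA⟩
        rw [vrsi, if_neg (by tauto), if_neg (by tauto), hrsiA,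
          Finset.card_erase_of_mem hpA]
        omega
end

section
/- For every permutation p of [n], 2̲31(p) − 2̲13(p) = n − p_n − des(p), where 2̲31 and 2̲13 count occurrences of the vincular patterns 2-31 and 2-13 respectively. Equivalently MAJ(p) − BAST(p) = n − p_n − des(p). -/
open Finset

variable {n : ℕ}

/-- The word (in one-line notation, with letters `1,...,n`) of a permutation of `[n]`. -/
def pw (p : Equiv.Perm (Fin n)) : Fin n → ℕ := fun i => (p i : ℕ) + 1

/-- Descent number of a word: positions `i` with `w_i > w_{i+1}`. -/
def desW (w : Fin n → ℕ) : ℕ :=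
  (Finset.univ.filter fun i : Fin n => ∃ j : Fin n, (j : ℕ) = (i : ℕ) + 1 ∧ w j < w i).card

/-- Major index of a word: the sum of the (1-indexed) descent positions. -/
def majW (w : Fin n → ℕ) : ℕ :=
  ∑ i ∈ Finset.univ.filter
      (fun i : Fin n => ∃ j : Fin n, (j : ℕ) = (i : ℕ) + 1 ∧ w j < w i), ((i : ℕ) + 1)

/-- Occurrences of the vincular pattern 2-31: `i < j` with `w_{j+1} < w_i < w_j`. -/
def pat2_31 (w : Fin n → ℕ) : ℕ :=
  ((Finset.univ ×ˢ Finset.univ).filter fun q : Fin n × Fin n =>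
    q.1 < q.2 ∧ ∃ j' : Fin n, (j' : ℕ) = (q.2 : ℕ) + 1 ∧ w j' < w q.1 ∧ w q.1 < w q.2).card

/-- Occurrences of the vincular pattern 2-13: `i < j` with `w_j < w_i < w_{j+1}`. -/
def pat2_13 (w : Fin n → ℕ) : ℕ :=
  ((Finset.univ ×ˢ Finset.univ).filter fun q : Fin n × Fin n =>
    q.1 < q.2 ∧ ∃ j' : Fin n, (j' : ℕ) = (q.2 : ℕ) + 1 ∧ w q.2 < w q.1 ∧ w q.1 < w j').card

/-- Occurrences of the vincular pattern 1-32: `i < j` with `w_i < w_{j+1} < w_j`. -/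
def pat1_32 (w : Fin n → ℕ) : ℕ :=
  ((Finset.univ ×ˢ Finset.univ).filter fun q : Fin n × Fin n =>
    q.1 < q.2 ∧ ∃ j' : Fin n, (j' : ℕ) = (q.2 : ℕ) + 1 ∧ w q.1 < w j' ∧ w j' < w q.2).card

/-- Occurrences of the vincular pattern 3-21: `i < j` with `w_{j+1} < w_j < w_i`. -/
def pat3_21 (w : Fin n → ℕ) : ℕ :=
  ((Finset.univ ×ˢ Finset.univ).filter fun q : Fin n × Fin n =>
    q.1 < q.2 ∧ ∃ j' : Fin n, (j' : ℕ) = (q.2 : ℕ) + 1 ∧ w j' < w q.2 ∧ w q.2 < w q.1).card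

/-- The Babson–Steingrímsson statistic BAST = (21) + (2-13) + (1-32) + (3-21). -/
def BAST (w : Fin n → ℕ) : ℕ := desW w + pat2_13 w + pat1_32 w + pat3_21 w

/-- `w` avoids the vincular pattern 1-32: there is no `i < j` with `w_i < w_{j+1} < w_j`. -/
def Avoids132 (w : Fin n → ℕ) : Prop :=
  ∀ i j j' : Fin n, i < j → (j' : ℕ) = (j : ℕ) + 1 → ¬(w i < w j' ∧ w j' < w j)

lemma tele (f : ℕ → ℤ) (a : ℕ) : ∀ b, a ≤ b →
    ∑ j ∈ Finset.Ico a b, (f j - f (j+1)) = f a - f b := by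
  intro b hb
  induction b, hb using Nat.le_induction with
  | base => simp
  | succ b hb ih => rw [Finset.sum_Ico_succ_top hb, ih]; ring

lemma sumA (n : ℕ) (u : ℕ → ℕ) (hinj : ∀ k < n, ∀ l < n, u k = u l → k = l) :
    ∑ i ∈ range n, ∑ j ∈ range n,
      ((if i < j ∧ j+1 < n ∧ u (j+1) < u i ∧ u i < u j then (1:ℤ) else 0)
        - (if i < j ∧ j+1 < n ∧ u j < u i ∧ u i < u (j+1) then (1:ℤ) else 0))
    = ∑ i ∈ range n, ((if i+1 < n ∧ u i < u (i+1) then (1:ℤ) else 0)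
        - (if i < n-1 ∧ u i < u (n-1) then (1:ℤ) else 0)) := by
  refine Finset.sum_congr rfl fun i hi => ?_
  rw [Finset.mem_range] at hi
  have e1 : ∑ j ∈ range n,
      ((if i < j ∧ j+1 < n ∧ u (j+1) < u i ∧ u i < u j then (1:ℤ) else 0)
        - (if i < j ∧ j+1 < n ∧ u j < u i ∧ u i < u (j+1) then (1:ℤ) else 0))
      = ∑ j ∈ Finset.Ico (i+1) (n-1),
        ((if u i < u j then (1:ℤ) else 0) - (if u i < u (j+1) then (1:ℤ) else 0)) := by
    rw [show Finset.Ico (i+1) (n-1) = (range n).filter (fun j => i < j ∧ j+1 < n) from by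
      ext j; simp only [Finset.mem_Ico, Finset.mem_range, Finset.mem_filter]; omega]
    rw [Finset.sum_filter]
    refine Finset.sum_congr rfl fun j hj => ?_
    rw [Finset.mem_range] at hj
    by_cases h : i < j ∧ j + 1 < n
    · have h1 : u i ≠ u j := fun e => by have := hinj i hi j hj e; omega
      have h2 : u i ≠ u (j+1) := fun e => by have := hinj i hi (j+1) h.2 e; omega
      split_ifs <;> omega
    · split_ifs <;> omega
  rw [e1]
  by_cases h2 : i + 1 ≤ n - 1
  · rw [tele (fun j => if u i < u j then (1:ℤ) else 0) (i+1) (n-1) h2]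
    have hA : i + 1 < n := by omega
    have hB : i < n - 1 := by omega
    split_ifs <;> omega
  · rw [Finset.Ico_eq_empty (by omega), Finset.sum_empty]
    split_ifs <;> omega

lemma sumDes (n : ℕ) (hn : 0 < n) (u : ℕ → ℕ) (hinj : ∀ k < n, ∀ l < n, u k = u l → k = l) :
    ∑ i ∈ range n, (if i+1 < n ∧ u i < u (i+1) then (1:ℤ) else 0)
      = (n : ℤ) - 1 - ∑ j ∈ range n, (if j+1 < n ∧ u (j+1) < u j then (1:ℤ) else 0) := by
  have key : ∑ i ∈ range n, ((if i+1 < n ∧ u i < u (i+1) then (1:ℤ) else 0)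
      + (if i+1 < n ∧ u (i+1) < u i then (1:ℤ) else 0))
      = ∑ i ∈ range n, (if i+1 < n then (1:ℤ) else 0) := by
    refine Finset.sum_congr rfl fun i hi => ?_
    rw [Finset.mem_range] at hi
    by_cases h : i + 1 < n
    · have h1 : u i ≠ u (i+1) := fun e => by have := hinj i hi (i+1) h e; omega
      split_ifs <;> omega
    · split_ifs <;> omega
  have c1 : ∑ i ∈ range n, (if i+1 < n then (1:ℤ) else 0) = (n : ℤ) - 1 := by
    rw [Finset.sum_boole]
    rw [show (range n).filter (fun i => i + 1 < n) = range (n-1) from by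
      ext j; simp only [Finset.mem_range, Finset.mem_filter]; omega]
    rw [Finset.card_range]
    omega
  rw [Finset.sum_add_distrib] at key
  linarith [key, c1]

lemma sumLast (n : ℕ) (hn : 0 < n) (u : ℕ → ℕ)
    (hinj : ∀ k < n, ∀ l < n, u k = u l → k = l)
    (hlow : ∀ k < n, 1 ≤ u k) (hub : ∀ k < n, u k ≤ n)
    (hsur : ∀ v, 1 ≤ v → v ≤ n → ∃ k, k < n ∧ u k = v) :
    ∑ i ∈ range n, (if i < n-1 ∧ u i < u (n-1) then (1:ℤ) else 0)
      = (u (n-1) : ℤ) - 1 := by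
  rw [Finset.sum_boole]
  have hcard : ((range n).filter (fun i => i < n-1 ∧ u i < u (n-1))).card
      = (Finset.Ico 1 (u (n-1))).card := by
    apply Finset.card_bij (fun a _ => u a)
    · intro a ha
      simp only [Finset.mem_filter, Finset.mem_range] at ha
      simp only [Finset.mem_Ico]
      exact ⟨hlow a ha.1, ha.2.2⟩
    · intro a ha b hb hab
      simp only [Finset.mem_filter, Finset.mem_range] at ha hb
      exact hinj a ha.1 b hb.1 hab
    · intro b hb
      simp only [Finset.mem_Ico] at hb
      obtain ⟨k, hk, huk⟩ := hsur b hb.1 (le_trans (le_of_lt hb.2) (hub (n-1) (by omega)))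
      refine ⟨k, ?_, huk⟩
      simp only [Finset.mem_filter, Finset.mem_range]
      have : k ≠ n - 1 := fun e => by rw [e] at huk; omega
      exact ⟨hk, by omega, by omega⟩
  rw [hcard, Nat.card_Ico]
  have := hlow (n-1) (by omega)
  omega

lemma sumMaj (n : ℕ) (u : ℕ → ℕ) (hinj : ∀ k < n, ∀ l < n, u k = u l → k = l) :
    ∑ j ∈ range n, (if j+1 < n ∧ u (j+1) < u j then ((j:ℤ)+1) else 0)
      = ∑ j ∈ range n, (if j+1 < n ∧ u (j+1) < u j then (1:ℤ) else 0)
        + ∑ i ∈ range n, ∑ j ∈ range n,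
          ((if i < j ∧ j+1 < n ∧ u (j+1) < u i ∧ u i < u j then (1:ℤ) else 0)
           + (if i < j ∧ j+1 < n ∧ u i < u (j+1) ∧ u (j+1) < u j then (1:ℤ) else 0)
           + (if i < j ∧ j+1 < n ∧ u (j+1) < u j ∧ u j < u i then (1:ℤ) else 0)) := by
  have step1 : ∀ j ∈ range n, (if j+1 < n ∧ u (j+1) < u j then ((j:ℤ)+1) else 0)
      = (if j+1 < n ∧ u (j+1) < u j then (1:ℤ) else 0)
        + ∑ i ∈ range n, (if i < j ∧ j+1 < n ∧ u (j+1) < u j then (1:ℤ) else 0) := by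
    intro j hj
    rw [Finset.mem_range] at hj
    by_cases h : j + 1 < n ∧ u (j+1) < u j
    · rw [if_pos h, if_pos h]
      have : ∑ i ∈ range n, (if i < j ∧ j+1 < n ∧ u (j+1) < u j then (1:ℤ) else 0)
          = ∑ i ∈ range n, (if i < j then (1:ℤ) else 0) := by
        refine Finset.sum_congr rfl fun i _ => ?_
        split_ifs <;> omega
      rw [this, Finset.sum_boole]
      rw [show (range n).filter (fun i => i < j) = range j from by
        ext i; simp only [Finset.mem_range, Finset.mem_filter]; omega]
      rw [Finset.card_range]; ring
    · rw [if_neg h, if_neg h]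
      rw [Finset.sum_eq_zero fun i _ => by split_ifs <;> omega]
      ring
  rw [Finset.sum_congr rfl step1, Finset.sum_add_distrib]
  congr 1
  rw [Finset.sum_comm]
  refine Finset.sum_congr rfl fun i hi => Finset.sum_congr rfl fun j hj => ?_
  rw [Finset.mem_range] at hi hj
  by_cases h : i < j ∧ j + 1 < n
  · have h1 : u i ≠ u j := fun e => by have := hinj i hi j hj e; omega
    have h2 : u i ≠ u (j+1) := fun e => by have := hinj i hi (j+1) h.2 e; omega
    split_ifs <;> omega
  · split_ifs <;> omega

def uOf (n : ℕ) (w : Fin n → ℕ) (k : ℕ) : ℕ := if h : k < n then w ⟨k, h⟩ else 0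

lemma uOf_coe {n : ℕ} (w : Fin n → ℕ) (m : Fin n) : uOf n w (m : ℕ) = w m := by
  simp [uOf, m.isLt]

lemma card_pat (n : ℕ) (w : Fin n → ℕ) (A : ℕ → ℕ → ℕ → Prop) [∀ a b c, Decidable (A a b c)] :
    (((Finset.univ ×ˢ Finset.univ).filter fun q : Fin n × Fin n =>
      q.1 < q.2 ∧ ∃ j' : Fin n, (j' : ℕ) = (q.2 : ℕ) + 1 ∧ A (w j') (w q.1) (w q.2)).card : ℤ)
    = ∑ i ∈ range n, ∑ j ∈ range n,
        (if i < j ∧ j+1 < n ∧ A (uOf n w (j+1)) (uOf n w i) (uOf n w j) then (1:ℤ) else 0) := by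
  rw [Finset.card_filter]
  push_cast
  rw [Finset.sum_product]
  rw [← Fin.sum_univ_eq_sum_range (fun a => ∑ j ∈ range n,
      (if a < j ∧ j+1 < n ∧ A (uOf n w (j+1)) (uOf n w a) (uOf n w j) then (1:ℤ) else 0)) n]
  refine Finset.sum_congr rfl fun i _ => ?_
  rw [← Fin.sum_univ_eq_sum_range (fun b =>
      (if (i:ℕ) < b ∧ b+1 < n ∧ A (uOf n w (b+1)) (uOf n w (i:ℕ)) (uOf n w b) then (1:ℤ) else 0)) n]
  refine Finset.sum_congr rfl fun j _ => ?_
  refine if_congr ?_ rfl rfl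
  constructor
  · rintro ⟨hij, j', hj', hA⟩
    have hjn : (j:ℕ)+1 < n := hj' ▸ j'.isLt
    refine ⟨hij, hjn, ?_⟩
    have e1 : uOf n w ((j:ℕ)+1) = w j' := by rw [← hj', uOf_coe]
    rw [e1, uOf_coe, uOf_coe]
    exact hA
  · rintro ⟨hij, hjn, hA⟩
    refine ⟨hij, ⟨(j:ℕ)+1, hjn⟩, rfl, ?_⟩
    have e1 : uOf n w ((j:ℕ)+1) = w ⟨(j:ℕ)+1, hjn⟩ := dif_pos hjn
    rw [e1, uOf_coe, uOf_coe] at hA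
    exact hA

lemma card_des (n : ℕ) (w : Fin n → ℕ) :
    ((Finset.univ.filter fun i : Fin n =>
        ∃ j : Fin n, (j : ℕ) = (i : ℕ) + 1 ∧ w j < w i).card : ℤ)
    = ∑ j ∈ range n, (if j+1 < n ∧ uOf n w (j+1) < uOf n w j then (1:ℤ) else 0) := by
  rw [Finset.card_filter]
  push_cast
  rw [← Fin.sum_univ_eq_sum_range (fun b =>
      (if b+1 < n ∧ uOf n w (b+1) < uOf n w b then (1:ℤ) else 0)) n]
  refine Finset.sum_congr rfl fun i _ => ?_
  refine if_congr ?_ rfl rfl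
  constructor
  · rintro ⟨j, hj, hlt⟩
    have hjn : (i:ℕ)+1 < n := hj ▸ j.isLt
    refine ⟨hjn, ?_⟩
    have e1 : uOf n w ((i:ℕ)+1) = w j := by rw [← hj, uOf_coe]
    rw [e1, uOf_coe]
    exact hlt
  · rintro ⟨hjn, hlt⟩
    refine ⟨⟨(i:ℕ)+1, hjn⟩, rfl, ?_⟩
    have e1 : uOf n w ((i:ℕ)+1) = w ⟨(i:ℕ)+1, hjn⟩ := dif_pos hjn
    rw [e1, uOf_coe] at hlt
    exact hlt

lemma card_maj (n : ℕ) (w : Fin n → ℕ) :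
    ((∑ i ∈ Finset.univ.filter
        (fun i : Fin n => ∃ j : Fin n, (j : ℕ) = (i : ℕ) + 1 ∧ w j < w i), ((i : ℕ) + 1) : ℕ) : ℤ)
    = ∑ j ∈ range n, (if j+1 < n ∧ uOf n w (j+1) < uOf n w j then ((j:ℤ)+1) else 0) := by
  rw [Finset.sum_filter]
  push_cast
  rw [← Fin.sum_univ_eq_sum_range (fun b =>
      (if b+1 < n ∧ uOf n w (b+1) < uOf n w b then ((b:ℤ)+1) else 0)) n]
  refine Finset.sum_congr rfl fun i _ => ?_
  refine if_congr ?_ rfl rfl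
  constructor
  · rintro ⟨j, hj, hlt⟩
    have hjn : (i:ℕ)+1 < n := hj ▸ j.isLt
    refine ⟨hjn, ?_⟩
    have e1 : uOf n w ((i:ℕ)+1) = w j := by rw [← hj, uOf_coe]
    rw [e1, uOf_coe]
    exact hlt
  · rintro ⟨hjn, hlt⟩
    refine ⟨⟨(i:ℕ)+1, hjn⟩, rfl, ?_⟩
    have e1 : uOf n w ((i:ℕ)+1) = w ⟨(i:ℕ)+1, hjn⟩ := dif_pos hjn
    rw [e1, uOf_coe] at hlt
    exact hlt

/-- For every permutation `p` of `[n]`: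
`(2-31)(p) − (2-13)(p) = n − pₙ − des(p) = MAJ(p) − BAST(p)`. -/
theorem stmt7 (n : ℕ) (hn : 0 < n) (p : Equiv.Perm (Fin n)) :
    (pat2_31 (pw p) : ℤ) - (pat2_13 (pw p) : ℤ) =
        (n : ℤ) - (pw p ⟨n - 1, Nat.sub_lt hn Nat.one_pos⟩ : ℤ) - (desW (pw p) : ℤ) ∧
      (majW (pw p) : ℤ) - (BAST (pw p) : ℤ) =
        (n : ℤ) - (pw p ⟨n - 1, Nat.sub_lt hn Nat.one_pos⟩ : ℤ) - (desW (pw p) : ℤ) := by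
  set w : Fin n → ℕ := pw p with hw
  set u : ℕ → ℕ := uOf n w with hudef
  -- basic properties of u
  have hval : ∀ k (h : k < n), u k = (p ⟨k, h⟩ : ℕ) + 1 := by
    intro k h; simp [hudef, uOf, h, hw, pw]
  have hinj : ∀ k < n, ∀ l < n, u k = u l → k = l := by
    intro k hk l hl he
    rw [hval k hk, hval l hl] at he
    have : p ⟨k, hk⟩ = p ⟨l, hl⟩ := Fin.ext (by omega)
    have := p.injective this
    exact congrArg Fin.val (by exact_mod_cast this)
  have hlow : ∀ k < n, 1 ≤ u k := by intro k hk; rw [hval k hk]; omega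
  have hub : ∀ k < n, u k ≤ n := by
    intro k hk; rw [hval k hk]
    have := (p ⟨k, hk⟩).isLt; omega
  have hsur : ∀ v, 1 ≤ v → v ≤ n → ∃ k, k < n ∧ u k = v := by
    intro v h1 h2
    refine ⟨(p.symm ⟨v - 1, by omega⟩ : ℕ), (p.symm ⟨v - 1, by omega⟩).isLt, ?_⟩
    rw [hval _ (p.symm ⟨v - 1, by omega⟩).isLt]
    have : p (p.symm ⟨v - 1, by omega⟩) = ⟨v - 1, by omega⟩ := by
      rw [Equiv.apply_symm_apply]
    rw [show (⟨(p.symm ⟨v - 1, by omega⟩ : ℕ), _⟩ : Fin n) = p.symm ⟨v - 1, by omega⟩ from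
      Fin.ext rfl, this]
    simp; omega
  -- translations
  have h31 : (pat2_31 w : ℤ) = ∑ i ∈ range n, ∑ j ∈ range n,
      (if i < j ∧ j+1 < n ∧ u (j+1) < u i ∧ u i < u j then (1:ℤ) else 0) :=
    card_pat n w (fun a b c => a < b ∧ b < c)
  have h13 : (pat2_13 w : ℤ) = ∑ i ∈ range n, ∑ j ∈ range n,
      (if i < j ∧ j+1 < n ∧ u j < u i ∧ u i < u (j+1) then (1:ℤ) else 0) :=
    card_pat n w (fun a b c => c < b ∧ b < a)
  have h132 : (pat1_32 w : ℤ) = ∑ i ∈ range n, ∑ j ∈ range n,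
      (if i < j ∧ j+1 < n ∧ u i < u (j+1) ∧ u (j+1) < u j then (1:ℤ) else 0) :=
    card_pat n w (fun a b c => b < a ∧ a < c)
  have h321 : (pat3_21 w : ℤ) = ∑ i ∈ range n, ∑ j ∈ range n,
      (if i < j ∧ j+1 < n ∧ u (j+1) < u j ∧ u j < u i then (1:ℤ) else 0) :=
    card_pat n w (fun a b c => a < c ∧ c < b)
  have hdes : (desW w : ℤ) = ∑ j ∈ range n,
      (if j+1 < n ∧ u (j+1) < u j then (1:ℤ) else 0) := card_des n w
  have hmaj : (majW w : ℤ) = ∑ j ∈ range n,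
      (if j+1 < n ∧ u (j+1) < u j then ((j:ℤ)+1) else 0) := card_maj n w
  have hlast : (w ⟨n - 1, Nat.sub_lt hn Nat.one_pos⟩ : ℤ) = (u (n-1) : ℤ) := by
    rw [hudef]; unfold uOf; rw [dif_pos (Nat.sub_lt hn Nat.one_pos)]
  have hbast : (BAST w : ℤ) = (desW w : ℤ) + (pat2_13 w : ℤ) + (pat1_32 w : ℤ) + (pat3_21 w : ℤ) := by
    unfold BAST; push_cast; ring
  -- part 1
  have part1 : (pat2_31 w : ℤ) - (pat2_13 w : ℤ) =
      (n : ℤ) - (w ⟨n - 1, Nat.sub_lt hn Nat.one_pos⟩ : ℤ) - (desW w : ℤ) := by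
    rw [h31, h13, hdes, hlast]
    rw [← Finset.sum_sub_distrib]
    simp only [← Finset.sum_sub_distrib]
    rw [sumA n u hinj, Finset.sum_sub_distrib, sumDes n hn u hinj,
      sumLast n hn u hinj hlow hub hsur]
    ring
  refine ⟨part1, ?_⟩
  -- part 2
  have hmaj2 := sumMaj n u hinj
  rw [hbast, hmaj, hmaj2, ← hdes]
  simp only [Finset.sum_add_distrib]
  rw [← h31, ← h132, ← h321]
  linarith [part1]
end

section
/- The map θ, mapping a barred permutation p̄ of [n] to the word w with w_i = 1 + (number of bars to the right of the letter i in p̄), is a bijection from the set of barred permutations of [n] onto the set of unrestricted growth functions of length n. -/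
/-!
Read along `p`, the word `θ(p̄) ∘ p` is weakly decreasing, ends at `1` and drops by exactly one at
each bar; hence its values fill `[1, 1 + #bars]` and `θ(p̄)` is a URG. Between two bars `p`
ascends, so `p` lists the letters by decreasing value of `θ(p̄)` with ties in increasing order, and
the bars sit at the descents of `θ(p̄) ∘ p`: both are read off the word. Conversely, for a URG `w`
sorted in this way, `w ∘ p` never drops by more than one (the skipped value would be missing), so
`θ` gives back `w`.
-/

open Finset

variable {n : ℕ}

/-- `w` is an unrestricted growth function: positive letters, and every value
`1 ≤ j ≤ bk(w)` occurs in `w`. -/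
def IsURG (w : Fin n → ℕ) : Prop :=
  (∀ i, 1 ≤ w i) ∧ ∀ j, 1 ≤ j → j ≤ Finset.univ.sup w → ∃ i, w i = j

/-- `bars` is a valid set of bars for the permutation `p`: each bar sits between
two consecutive letters, and there is a bar at every descent of `p`. -/
def IsBarred (p : Equiv.Perm (Fin n)) (bars : Finset (Fin n)) : Prop :=
  (∀ i ∈ bars, (i : ℕ) + 1 < n) ∧
    ∀ i j : Fin n, (j : ℕ) = (i : ℕ) + 1 → p j < p i → i ∈ bars

/-- The word θ(p̄): the letter `i` (here `i : Fin n` encodes the letter `i+1`) is sent to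
one plus the number of bars lying to the right of the letter `i+1` in the barred permutation. -/
def theta (p : Equiv.Perm (Fin n)) (bars : Finset (Fin n)) : Fin n → ℕ :=
  fun i => 1 + (bars.filter fun b => p.symm i ≤ b).card

theorem Fin.strictMono_of_lt_of_val_eq_succ {α : Type*} [Preorder α] {f : Fin n → α}
    (h : ∀ i j : Fin n, (j : ℕ) = i + 1 → f i < f j) : StrictMono f := by
  cases n with
  | zero => exact fun i => i.elim0
  | succ m => exact Fin.strictMono_iff_lt_succ.2 fun i => h _ _ (by simp)

theorem Fin.eq_of_eq_of_val_eq_succ {α : Type*} {f g : Fin n → α}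
    (hlast : ∀ k : Fin n, (k : ℕ) + 1 = n → f k = g k)
    (hstep : ∀ k k' : Fin n, (k' : ℕ) = k + 1 → f k' = g k' → f k = g k) : f = g := by
  cases n with
  | zero => exact funext fun i => i.elim0
  | succ m =>
    funext i
    induction i using Fin.reverseInduction with
    | last => exact hlast _ (by simp)
    | cast i ih => exact hstep _ _ (by simp) ih

theorem Nat.exists_eq_of_le_add_one {f : ℕ → ℕ} (hf : ∀ m, f m ≤ f (m + 1) + 1) {N t : ℕ}
    (hN : f N ≤ t) (ht : t ≤ f 0) : ∃ m ≤ N, f m = t := by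
  classical
  have hex : ∃ m, f m ≤ t := ⟨N, hN⟩
  refine ⟨Nat.find hex, Nat.find_min' hex hN, le_antisymm (Nat.find_spec hex) ?_⟩
  rcases Nat.eq_zero_or_pos (Nat.find hex) with h0 | hpos
  · rwa [h0]
  · have hprev := Nat.find_min hex (Nat.sub_lt hpos one_pos)
    have hdrop := hf (Nat.find hex - 1)
    rw [Nat.sub_add_cancel hpos] at hdrop
    omega

def descents (u : Fin n → ℕ) : Finset (Fin n) :=
  univ.filter fun i => ∃ j : Fin n, (j : ℕ) = i + 1 ∧ u j < u i

theorem mem_descents_iff {u : Fin n → ℕ} {k k' : Fin n} (h : (k' : ℕ) = k + 1) :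
    k ∈ descents u ↔ u k' < u k := by
  simp only [descents, mem_filter, mem_univ, true_and]
  constructor
  · rintro ⟨j, hj, hlt⟩
    rwa [Fin.ext (hj.trans h.symm)] at hlt
  · exact fun hlt => ⟨k', h, hlt⟩

theorem val_add_one_lt_of_mem_descents {u : Fin n → ℕ} {k : Fin n} (hk : k ∈ descents u) :
    (k : ℕ) + 1 < n := by
  obtain ⟨-, j, hj, -⟩ := mem_filter.1 hk
  exact hj ▸ j.isLt

theorem apply_eq_add_ite_mem_descents {u : Fin n → ℕ} {k k' : Fin n} (h : (k' : ℕ) = k + 1)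
    (hle : u k' ≤ u k) (hstep : u k ≤ u k' + 1) :
    u k = u k' + if k ∈ descents u then 1 else 0 := by
  simp only [mem_descents_iff h]
  split_ifs <;> omega

/-- The number of bars to the right of the letter in position `m` of `p̄`. -/
def barCount (bars : Finset (Fin n)) (m : ℕ) : ℕ := #(bars.filter fun b : Fin n => m ≤ (b : ℕ))

section BarCount

variable (bars : Finset (Fin n))

theorem barCount_antitone : Antitone (barCount bars) :=
  fun _ _ hab => card_le_card (monotone_filter_right _ fun _ _ => hab.trans)

theorem barCount_eq_add_card (m : ℕ) :
    barCount bars m = barCount bars (m + 1) + #(bars.filter fun b : Fin n => (b : ℕ) = m) := by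
  rw [barCount, barCount, ← card_union_of_disjoint (disjoint_filter.2 fun _ _ h h' => by omega),
    ← filter_or]
  congr 1
  exact filter_congr fun _ _ => by omega

theorem barCount_le_add_one (m : ℕ) : barCount bars m ≤ barCount bars (m + 1) + 1 := by
  rw [barCount_eq_add_card]
  gcongr
  exact card_le_one.2 fun a ha b hb => Fin.ext ((mem_filter.1 ha).2.trans (mem_filter.1 hb).2.symm)

theorem barCount_eq_add_ite (k : Fin n) :
    barCount bars k = barCount bars (k + 1) + if k ∈ bars then 1 else 0 := by
  rw [barCount_eq_add_card]
  simp only [Fin.val_inj, filter_eq']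
  split_ifs <;> simp

theorem barCount_eq_zero {m : ℕ} (h : ∀ b : Fin n, b ∈ bars → (b : ℕ) < m) :
    barCount bars m = 0 :=
  card_eq_zero.2 (filter_eq_empty_iff.2 fun b hb => not_le.2 (h b hb))

end BarCount

theorem theta_apply_perm (p : Equiv.Perm (Fin n)) (bars : Finset (Fin n)) (k : Fin n) :
    theta p bars (p k) = 1 + barCount bars k := by
  simp only [theta, barCount, Equiv.symm_apply_apply, Fin.le_def]

section Theta

variable {p : Equiv.Perm (Fin n)} {bars : Finset (Fin n)}

theorem theta_apply_perm_eq_add_ite {k k' : Fin n} (h : (k' : ℕ) = k + 1) :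
    theta p bars (p k) = theta p bars (p k') + if k ∈ bars then 1 else 0 := by
  rw [theta_apply_perm, theta_apply_perm, barCount_eq_add_ite, h]
  omega

theorem descents_theta_comp (hb : IsBarred p bars) : descents (theta p bars ∘ p) = bars := by
  ext k
  by_cases hk : (k : ℕ) + 1 < n
  · rw [mem_descents_iff (k' := ⟨k + 1, hk⟩) rfl, Function.comp_apply, Function.comp_apply,
      theta_apply_perm_eq_add_ite (k' := ⟨k + 1, hk⟩) rfl]
    split_ifs with h <;> simp [h]
  · exact iff_of_false (fun h => hk (val_add_one_lt_of_mem_descents h)) fun h => hk (hb.1 k h)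

/-- Ties in `θ(p̄) ∘ p` occur only inside a bar-free run, where `p` ascends. -/
theorem strictMono_toLex_theta_comp (hb : IsBarred p bars) :
    StrictMono fun k => toLex (OrderDual.toDual (theta p bars (p k)), p k) := by
  refine Fin.strictMono_of_lt_of_val_eq_succ fun k k' h => Prod.Lex.toLex_lt_toLex.2 ?_
  have hstep := theta_apply_perm_eq_add_ite (p := p) (bars := bars) h
  by_cases hk : k ∈ bars
  · left
    rw [if_pos hk] at hstep
    exact OrderDual.toDual_lt_toDual.2 (by omega)
  · right
    rw [if_neg hk, add_zero] at hstep
    refine ⟨by rw [hstep], lt_of_le_of_ne (not_lt.1 fun hlt => hk (hb.2 k k' h hlt)) ?_⟩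
    exact p.injective.ne fun he => by rw [he] at h; omega

theorem isURG_theta (hb : IsBarred p bars) : IsURG (theta p bars) := by
  refine ⟨fun i => by simp [theta], fun j hj hjsup => ?_⟩
  obtain ⟨i, -, hji⟩ := (Finset.le_sup_iff (show ⊥ < j from hj)).1 hjsup
  have hlast : barCount bars (n - 1) ≤ j - 1 :=
    (barCount_eq_zero bars fun b hb' => by have := hb.1 b hb'; omega).trans_le (Nat.zero_le _)
  have hfirst : j - 1 ≤ barCount bars 0 := by
    have := barCount_antitone bars (Nat.zero_le ((p.symm i : Fin n) : ℕ))
    rw [← p.apply_symm_apply i, theta_apply_perm] at hji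
    omega
  obtain ⟨m, hm, hmj⟩ :=
    Nat.exists_eq_of_le_add_one (barCount_le_add_one bars) hlast hfirst
  refine ⟨p ⟨m, by have := i.isLt; omega⟩, ?_⟩
  rw [theta_apply_perm, Fin.val_mk]
  omega

end Theta

/-- The letters listed by decreasing value of `w`, equal values in increasing order. -/
def wordPerm (w : Fin n → ℕ) : Equiv.Perm (Fin n) :=
  Tuple.sort (OrderDual.toDual ∘ w)

def wordBars (w : Fin n → ℕ) : Finset (Fin n) :=
  descents (w ∘ wordPerm w)

section WordPerm

variable {w : Fin n → ℕ}

theorem antitone_comp_wordPerm (w : Fin n → ℕ) : Antitone (w ∘ wordPerm w) :=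
  monotone_toDual_comp_iff.1 (Tuple.monotone_sort _)

theorem wordPerm_lt_of_apply_eq {i j : Fin n} (hij : i < j)
    (h : w (wordPerm w i) = w (wordPerm w j)) : wordPerm w i < wordPerm w j :=
  (Tuple.eq_sort_iff.1 rfl).2 i j hij (congrArg OrderDual.toDual h)

theorem wordPerm_theta {p : Equiv.Perm (Fin n)} {bars : Finset (Fin n)} (hb : IsBarred p bars) :
    wordPerm (theta p bars) = p :=
  (Tuple.eq_sort_iff'.2 fun _ _ hij => strictMono_toLex_theta_comp hb hij).symm

theorem wordBars_theta {p : Equiv.Perm (Fin n)} {bars : Finset (Fin n)} (hb : IsBarred p bars) :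
    wordBars (theta p bars) = bars := by
  rw [wordBars, wordPerm_theta hb, descents_theta_comp hb]

theorem isBarred_wordPerm_wordBars (w : Fin n → ℕ) : IsBarred (wordPerm w) (wordBars w) := by
  refine ⟨fun k hk => val_add_one_lt_of_mem_descents hk, fun k k' h hlt => ?_⟩
  have hkk' : k < k' := Fin.lt_def.2 (by omega)
  refine (mem_descents_iff h).2 ((antitone_comp_wordPerm w hkk'.le).lt_of_ne fun he => ?_)
  exact lt_asymm (wordPerm_lt_of_apply_eq hkk' he.symm) hlt

end WordPerm

namespace IsURG

variable {w : Fin n → ℕ} {σ : Equiv.Perm (Fin n)}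

/-- A drop by two or more in `w ∘ σ` would skip a value below `max w`. -/
theorem apply_le_apply_add_one (hw : IsURG w) (hσ : Antitone (w ∘ σ)) {k k' : Fin n}
    (h : (k' : ℕ) = k + 1) : w (σ k) ≤ w (σ k') + 1 := by
  by_contra! hgap
  obtain ⟨i, hi⟩ := hw.2 (w (σ k') + 1) (by omega)
    ((show w (σ k') + 1 ≤ w (σ k) by omega).trans (le_sup (mem_univ _)))
  have hσi := σ.apply_symm_apply i
  rcases le_or_gt (σ.symm i : ℕ) k with hle | hgt
  · have := hσ (Fin.le_def.2 hle)
    simp only [Function.comp_apply, hσi] at this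
    omega
  · have := hσ (show k' ≤ σ.symm i from Fin.le_def.2 (by omega))
    simp only [Function.comp_apply, hσi] at this
    omega

theorem apply_eq_one_of_val_add_one_eq (hw : IsURG w) (hσ : Antitone (w ∘ σ)) {k : Fin n}
    (hk : (k : ℕ) + 1 = n) : w (σ k) = 1 := by
  obtain ⟨i, hi⟩ := hw.2 1 le_rfl ((hw.1 (σ k)).trans (le_sup (mem_univ _)))
  have := hσ (show σ.symm i ≤ k from Fin.le_def.2 (by omega))
  simp only [Function.comp_apply, σ.apply_symm_apply, hi] at this
  exact le_antisymm this (hw.1 _)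

end IsURG

theorem theta_wordPerm_wordBars {w : Fin n → ℕ} (hw : IsURG w) :
    theta (wordPerm w) (wordBars w) = w := by
  set σ := wordPerm w
  have hσ : Antitone (w ∘ σ) := antitone_comp_wordPerm w
  suffices h : theta σ (wordBars w) ∘ σ = w ∘ σ by
    funext i
    simpa using congrFun h (σ.symm i)
  refine Fin.eq_of_eq_of_val_eq_succ (fun k hk => ?_) fun k k' h ih => ?_
  · have hzero : barCount (wordBars w) k = 0 := barCount_eq_zero _ fun b hb => by
      have := val_add_one_lt_of_mem_descents hb
      omega
    simp only [Function.comp_apply, theta_apply_perm, hzero,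
      hw.apply_eq_one_of_val_add_one_eq hσ hk]
  · have hstep := apply_eq_add_ite_mem_descents (u := w ∘ σ) h (hσ (Fin.le_def.2 (by omega)))
      (hw.apply_le_apply_add_one hσ h)
    simp only [Function.comp_apply] at ih hstep ⊢
    rw [theta_apply_perm_eq_add_ite h, ih, hstep]
    rfl

/-- θ is a bijection from barred permutations of [n] onto URGs of length n. -/
theorem stmt14 (n : ℕ) :
    Set.BijOn (fun x : Equiv.Perm (Fin n) × Finset (Fin n) => theta x.1 x.2)
      {x | IsBarred x.1 x.2} {w : Fin n → ℕ | IsURG w} := by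
  refine Set.InvOn.bijOn (f' := fun w => (wordPerm w, wordBars w)) ⟨?_, ?_⟩ ?_ ?_
  · exact fun x hx => Prod.ext (wordPerm_theta hx) (wordBars_theta hx)
  · exact fun w hw => theta_wordPerm_wordBars hw
  · exact fun x hx => isURG_theta hx
  · exact fun w _ => isBarred_wordPerm_wordBars w
end
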